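/- Let a, b, c, d be complex numbers with |a| = |b| = |c| = |d| = 1, and suppose ab ≠ cd, ac ≠ bd, ad ≠ bc. Set w1 := (ab(c+d) − cd(a+b))/(ab − cd), w2 := (ac(b+d) − bd(a+c))/(ac − bd), w3 := (ad(b+c) − bc(a+d))/(ad − bc). Then w2 is the orthocenter of the triangle with vertices 0, w1, w3; concretely, Re(w2 · conj(w3 − w1)) = 0 and Re((w2 − w1) · conj(w3 − 0)) = 0. -/

import Mathlib

/-!
Conjugation maps an intersection of chords of the unit circle to the same rational expression in
the inverted points, which simplifies to `(a + b - c - d) / (a b - c d)`. Since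
`Re (z conj w) = 0` iff `z conj w + conj z w = 0`, both orthogonality conditions become identities
between rational functions of `a, b, c, d`.
-/

open Complex ComplexConjugate

section Field

variable {K : Type*} [Field K]

/-- For `a, b, c, d` on the unit circle, the intersection of the lines `ab` and `cd`. -/
def chordIntersection (a b c d : K) : K :=
  (a * b * (c + d) - c * d * (a + b)) / (a * b - c * d)

lemma map_chordIntersection {L : Type*} [Field L] (f : K →+* L) (a b c d : K) :
    f (chordIntersection a b c d) = chordIntersection (f a) (f b) (f c) (f d) := by
  simp only [chordIntersection, map_div₀, map_sub, map_mul, map_add]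

lemma chordIntersection_inv {a b c d : K} (ha : a ≠ 0) (hb : b ≠ 0) (hc : c ≠ 0) (hd : d ≠ 0) :
    chordIntersection a⁻¹ b⁻¹ c⁻¹ d⁻¹ = (a + b - c - d) / (a * b - c * d) := by
  have habcd : a * b * c * d ≠ 0 := by simp [*]
  calc chordIntersection a⁻¹ b⁻¹ c⁻¹ d⁻¹ = (-(a + b - c - d)) / (-(a * b - c * d)) := by
        rw [chordIntersection, ← mul_div_mul_left _ _ habcd]
        congr 1 <;> field_simp <;> ring
    _ = _ := neg_div_neg_eq _ _

lemma chordIntersection_altitude_origin {a b c d : K} (ha : a ≠ 0) (hb : b ≠ 0) (hc : c ≠ 0)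
    (hd : d ≠ 0) (h1 : a * b ≠ c * d) (h2 : a * c ≠ b * d) (h3 : a * d ≠ b * c) :
    chordIntersection a c b d *
        (chordIntersection a⁻¹ d⁻¹ b⁻¹ c⁻¹ - chordIntersection a⁻¹ b⁻¹ c⁻¹ d⁻¹) +
      chordIntersection a⁻¹ c⁻¹ b⁻¹ d⁻¹ *
        (chordIntersection a d b c - chordIntersection a b c d) = 0 := by
  rw [chordIntersection_inv ha hb hc hd, chordIntersection_inv ha hc hb hd,
    chordIntersection_inv ha hd hb hc]
  unfold chordIntersection
  rw [← sub_ne_zero, mul_comm b c] at h3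
  rw [← sub_ne_zero] at h1 h2
  field_simp
  ring

lemma chordIntersection_altitude_ab {a b c d : K} (ha : a ≠ 0) (hb : b ≠ 0) (hc : c ≠ 0)
    (hd : d ≠ 0) (h1 : a * b ≠ c * d) (h2 : a * c ≠ b * d) :
    (chordIntersection a c b d - chordIntersection a b c d) *
        chordIntersection a⁻¹ d⁻¹ b⁻¹ c⁻¹ +
      (chordIntersection a⁻¹ c⁻¹ b⁻¹ d⁻¹ - chordIntersection a⁻¹ b⁻¹ c⁻¹ d⁻¹) *
        chordIntersection a d b c = 0 := by
  rw [chordIntersection_inv ha hb hc hd, chordIntersection_inv ha hc hb hd,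
    chordIntersection_inv ha hd hb hc]
  unfold chordIntersection
  rw [← sub_ne_zero] at h1 h2
  field_simp
  ring

end Field

lemma conj_chordIntersection {a b c d : ℂ} (ha : ‖a‖ = 1) (hb : ‖b‖ = 1) (hc : ‖c‖ = 1)
    (hd : ‖d‖ = 1) : conj (chordIntersection a b c d) = chordIntersection a⁻¹ b⁻¹ c⁻¹ d⁻¹ := by
  rw [map_chordIntersection, inv_eq_conj ha, inv_eq_conj hb, inv_eq_conj hc, inv_eq_conj hd]

lemma re_mul_conj_eq_zero_of {z w : ℂ} (h : z * conj w + conj z * w = 0) :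
    (z * conj w).re = 0 := by
  have := re_eq_add_conj (z * conj w)
  rw [map_mul, conj_conj, h, zero_div] at this
  exact_mod_cast this

theorem orthocenter_of_intersections (a b c d : ℂ)
    (ha : ‖a‖ = 1) (hb : ‖b‖ = 1)
    (hc : ‖c‖ = 1) (hd : ‖d‖ = 1)
    (h1 : a * b ≠ c * d) (h2 : a * c ≠ b * d) (h3 : a * d ≠ b * c) :
    let w1 := (a * b * (c + d) - c * d * (a + b)) / (a * b - c * d)
    let w2 := (a * c * (b + d) - b * d * (a + c)) / (a * c - b * d)
    let w3 := (a * d * (b + c) - b * c * (a + d)) / (a * d - b * c)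
    ((w2 - 0) * (starRingEnd ℂ) (w3 - w1)).re = 0 ∧
    ((w2 - w1) * (starRingEnd ℂ) (w3 - 0)).re = 0 := by
  have hne {z : ℂ} (hz : ‖z‖ = 1) : z ≠ 0 := norm_ne_zero_iff.mp (hz ▸ one_ne_zero)
  intro w1 w2 w3
  rw [sub_zero, sub_zero]
  change (chordIntersection a c b d *
        conj (chordIntersection a d b c - chordIntersection a b c d)).re = 0 ∧
      ((chordIntersection a c b d - chordIntersection a b c d) *
        conj (chordIntersection a d b c)).re = 0
  constructor <;> apply re_mul_conj_eq_zero_of <;>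
    simp only [map_sub, conj_chordIntersection ha hb hc hd, conj_chordIntersection ha hc hb hd,
      conj_chordIntersection ha hd hb hc]
  · exact chordIntersection_altitude_origin (hne ha) (hne hb) (hne hc) (hne hd) h1 h2 h3
  · exact chordIntersection_altitude_ab (hne ha) (hne hb) (hne hc) (hne hd) h1 h2
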